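/- arXiv:1410.2513 — 6 statements merged into one kernel-verified Lean document; each statement's English description precedes it below -/
import Mathlib

section
/- A cyclic surface in Sol₃ foliated by geodesics of the planes x = const of the form X(s,t) = (s, a(s), t), where a : I → ℝ is twice continuously differentiable on a nonempty open interval I and t ranges over ℝ, has zero mean curvature if and only if a is affine, i.e. there exist λ, μ ∈ ℝ with a(s) = λ·s + μ for all s ∈ I (so the surface is a vertical plane). Equivalently, the mean curvature vanishes identically if and only if a''(s) = 0 on I. -/
open Real

noncomputable section

/-- Tangent/ambient vectors of Sol₃ modeled on ℝ³. -/
abbrev V3 : Type := ℝ × ℝ × ℝ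

/-- The Sol₃ metric at a point `p = (x,y,z)`:
`g_p(u,v) = e^{2z}u₁v₁ + e^{-2z}u₂v₂ + u₃v₃`. -/
def gSol (p u v : V3) : ℝ :=
  exp (2 * p.2.2) * u.1 * v.1 + exp (-(2 * p.2.2)) * u.2.1 * v.2.1 + u.2.2 * v.2.2

/-- The Christoffel bilinear map of the Sol₃ metric at a point `p`. -/
def GammaSol (p u v : V3) : V3 :=
  (u.1 * v.2.2 + u.2.2 * v.1,
   -(u.2.1 * v.2.2 + u.2.2 * v.2.1),
   -exp (2 * p.2.2) * u.1 * v.1 + exp (-(2 * p.2.2)) * u.2.1 * v.2.1)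

/-- Partial derivative of a parametrized surface with respect to the first parameter. -/
def pXs (X : ℝ → ℝ → V3) (s t : ℝ) : V3 := deriv (fun s' => X s' t) s

/-- Partial derivative of a parametrized surface with respect to the second parameter. -/
def pXt (X : ℝ → ℝ → V3) (s t : ℝ) : V3 := deriv (fun t' => X s t') t

/-- Ambient second-order quantity `S_ss = X_ss + Γ_X(X_s, X_s)`. -/
def Sss (X : ℝ → ℝ → V3) (s t : ℝ) : V3 :=
  deriv (fun s' => pXs X s' t) s + GammaSol (X s t) (pXs X s t) (pXs X s t)

/-- Ambient second-order quantity `S_st = X_st + Γ_X(X_s, X_t)`. -/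
def Sst (X : ℝ → ℝ → V3) (s t : ℝ) : V3 :=
  deriv (fun t' => pXs X s t') t + GammaSol (X s t) (pXs X s t) (pXt X s t)

/-- Ambient second-order quantity `S_tt = X_tt + Γ_X(X_t, X_t)`. -/
def Stt (X : ℝ → ℝ → V3) (s t : ℝ) : V3 :=
  deriv (fun t' => pXt X s t') t + GammaSol (X s t) (pXt X s t) (pXt X s t)

/-- `X : I × J → Sol₃` has zero mean curvature:
for every point of `I × J` and every normal vector `n`,
`E·g(S_tt,n) - 2F·g(S_st,n) + G·g(S_ss,n) = 0`. -/
def MeanZero (I J : Set ℝ) (X : ℝ → ℝ → V3) : Prop :=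
  ∀ s ∈ I, ∀ t ∈ J, ∀ n : V3,
    gSol (X s t) n (pXs X s t) = 0 → gSol (X s t) n (pXt X s t) = 0 →
    gSol (X s t) (pXs X s t) (pXs X s t) * gSol (X s t) (Stt X s t) n
      - 2 * gSol (X s t) (pXs X s t) (pXt X s t) * gSol (X s t) (Sst X s t) n
      + gSol (X s t) (pXt X s t) (pXt X s t) * gSol (X s t) (Sss X s t) n = 0

/-- `X : I × J → Sol₃` has zero Gaussian curvature:
for every point of `I × J` and every normal vector `n`,
`g(S_ss,n)·g(S_tt,n) - g(S_st,n)² = 0`. -/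
def GaussZero (I J : Set ℝ) (X : ℝ → ℝ → V3) : Prop :=
  ∀ s ∈ I, ∀ t ∈ J, ∀ n : V3,
    gSol (X s t) n (pXs X s t) = 0 → gSol (X s t) n (pXt X s t) = 0 →
    gSol (X s t) (Sss X s t) n * gSol (X s t) (Stt X s t) n
      - (gSol (X s t) (Sst X s t) n) ^ 2 = 0

/-! Along `X(s,t) = (s, a(s), t)` one has `X_t = (0,0,1)`, so `F = 0`, `G = 1` and `S_tt = 0`:
the minimality condition reduces to `g(S_ss, n) = 0` for the normals `n`. These have `n₃ = 0`,
and then `g(S_ss, n) = e^{-2t} a''(s) n₂`; so the surface is minimal exactly when `a'' = 0`,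
i.e. when `a` is affine on the interval `I`. -/

open Filter Topology Set

section AffineOfDerivDeriv

variable {𝕜 : Type*} [RCLike 𝕜] {s : Set 𝕜} {f : 𝕜 → 𝕜}

theorem IsOpen.exists_affine_of_deriv_deriv_eq_zero (hs : IsOpen s) (hs' : IsPreconnected s)
    (hf : DifferentiableOn 𝕜 f s) (hf' : DifferentiableOn 𝕜 (deriv f) s)
    (hf'' : ∀ x ∈ s, deriv (deriv f) x = 0) : ∃ lam mu : 𝕜, ∀ x ∈ s, f x = lam * x + mu := by
  obtain ⟨lam, hlam⟩ := hs.exists_is_const_of_deriv_eq_zero hs' hf' hf''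
  have hline : DifferentiableOn 𝕜 (fun x => lam * x) s :=
    (differentiable_id.const_mul lam).differentiableOn
  obtain ⟨mu, hmu⟩ := hs.exists_eq_add_of_deriv_eq hs' hf hline fun x hx => by
    simp [hlam x hx]
  exact ⟨lam, mu, hmu⟩

theorem IsOpen.deriv_deriv_eq_zero_of_affine (hs : IsOpen s) {lam mu : 𝕜}
    (hf : ∀ x ∈ s, f x = lam * x + mu) : ∀ x ∈ s, deriv (deriv f) x = 0 := by
  have hf' : ∀ x ∈ s, deriv f x = lam := fun x hx => by
    rw [EventuallyEq.deriv_eq (f := fun y => lam * y + mu)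
      (eventually_of_mem (hs.mem_nhds hx) hf)]
    simp
  intro x hx
  rw [EventuallyEq.deriv_eq (f := fun _ => lam)
    (eventually_of_mem (hs.mem_nhds hx) hf'), deriv_const]

end AffineOfDerivDeriv

def verticalCylinder (a : ℝ → ℝ) : ℝ → ℝ → V3 := fun s t => (s, a s, t)

section VerticalCylinder

variable {a : ℝ → ℝ} {s t : ℝ}

theorem pXs_verticalCylinder (ha : DifferentiableAt ℝ a s) :
    pXs (verticalCylinder a) s t = (1, deriv a s, 0) :=
  ((hasDerivAt_id s).prodMk (ha.hasDerivAt.prodMk (hasDerivAt_const s t))).deriv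

theorem pXt_verticalCylinder : pXt (verticalCylinder a) s t = (0, 0, 1) :=
  ((hasDerivAt_const t s).prodMk ((hasDerivAt_const t (a s)).prodMk (hasDerivAt_id t))).deriv

theorem Stt_verticalCylinder : Stt (verticalCylinder a) s t = 0 := by
  simp [Stt, pXt_verticalCylinder, GammaSol]

theorem Sss_verticalCylinder (ha : ∀ᶠ x in 𝓝 s, DifferentiableAt ℝ a x)
    (ha' : DifferentiableAt ℝ (deriv a) s) :
    Sss (verticalCylinder a) s t =
      (0, deriv (deriv a) s, -exp (2 * t) + exp (-(2 * t)) * deriv a s ^ 2) := by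
  have hXs : (fun x => pXs (verticalCylinder a) x t) =ᶠ[𝓝 s] fun x => (1, deriv a x, 0) :=
    ha.mono fun x hx => pXs_verticalCylinder hx
  have hXss : HasDerivAt (fun x => ((1 : ℝ), deriv a x, (0 : ℝ))) (0, deriv (deriv a) s, 0) s :=
    (hasDerivAt_const s 1).prodMk (ha'.hasDerivAt.prodMk (hasDerivAt_const s 0))
  rw [Sss, hXs.deriv_eq, hXss.deriv, pXs_verticalCylinder ha.self_of_nhds]
  simp only [GammaSol, verticalCylinder, Prod.mk_add_mk, Prod.mk.injEq]
  exact ⟨by ring, by ring, by ring⟩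

end VerticalCylinder

theorem meanZero_verticalCylinder_iff {I J : Set ℝ} (hI : IsOpen I) (hJ : J.Nonempty)
    {a : ℝ → ℝ} (ha : DifferentiableOn ℝ a I) (ha' : DifferentiableOn ℝ (deriv a) I) :
    MeanZero I J (verticalCylinder a) ↔ ∀ s ∈ I, deriv (deriv a) s = 0 := by
  have hXs {s t} (hs : s ∈ I) :=
    pXs_verticalCylinder (a := a) (t := t) (ha.differentiableAt (hI.mem_nhds hs))
  have hSss {s t} (hs : s ∈ I) := Sss_verticalCylinder (a := a) (t := t)
    (eventually_of_mem (hI.mem_nhds hs) fun x hx => ha.differentiableAt (hI.mem_nhds hx))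
    (ha'.differentiableAt (hI.mem_nhds hs))
  constructor
  · intro h s hs
    obtain ⟨t, ht⟩ := hJ
    -- this `n` is normal to the surface, and `g(S_ss, n) = a''(s)`
    have hmean := h s hs t ht (-(exp (-(2 * t)) * deriv a s), exp (2 * t), 0)
    simp only [hXs hs, hSss hs, pXt_verticalCylinder, Stt_verticalCylinder, gSol,
      verticalCylinder, Prod.fst_zero, Prod.snd_zero] at hmean
    have hexp : exp (-(2 * t)) * exp (2 * t) = 1 := by rw [← exp_add, neg_add_cancel, exp_zero]
    linear_combination hmean (by ring) (by ring) - deriv (deriv a) s * hexp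
  · intro h s hs t _ n _ hn
    simp only [hXs hs, hSss hs, pXt_verticalCylinder, Stt_verticalCylinder, gSol,
      verticalCylinder, h s hs, Prod.fst_zero, Prod.snd_zero] at hn ⊢
    linear_combination (-exp (2 * t) + exp (-(2 * t)) * deriv a s ^ 2) * hn

theorem minimal_foliated_by_geodesics_general
    (I : Set ℝ) (hIo : IsOpen I) (hIc : I.OrdConnected)
    (a : ℝ → ℝ) (ha : ContDiffOn ℝ 2 a I) :
    (MeanZero I Set.univ (fun s t => (s, a s, t)) ↔
      ∃ lam mu : ℝ, ∀ s ∈ I, a s = lam * s + mu) ∧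
    (MeanZero I Set.univ (fun s t => (s, a s, t)) ↔
      ∀ s ∈ I, deriv (deriv a) s = 0) := by
  have ha₁ : DifferentiableOn ℝ a I := ha.differentiableOn (by norm_num)
  have ha₂ : DifferentiableOn ℝ (deriv a) I :=
    (ha.deriv_of_isOpen hIo (m := 1) (by norm_num)).differentiableOn (by norm_num)
  have hmean := meanZero_verticalCylinder_iff hIo univ_nonempty ha₁ ha₂
  refine ⟨hmean.trans ⟨hIo.exists_affine_of_deriv_deriv_eq_zero hIc.isPreconnected ha₁ ha₂, ?_⟩,
    hmean⟩
  rintro ⟨lam, mu, h⟩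
  exact hIo.deriv_deriv_eq_zero_of_affine h

/-- A cyclic surface `X(s,t) = (s, a(s), t)` foliated by geodesics
has zero mean curvature iff `a` is affine, equivalently iff `a'' = 0` on `I`. -/
theorem minimal_foliated_by_geodesics
    (I : Set ℝ) (hIo : IsOpen I) (hIne : I.Nonempty) (hIc : I.OrdConnected)
    (a : ℝ → ℝ) (ha : ContDiffOn ℝ 2 a I) :
    (MeanZero I Set.univ (fun s t => (s, a s, t)) ↔
      ∃ lam mu : ℝ, ∀ s ∈ I, a s = lam * s + mu) ∧
    (MeanZero I Set.univ (fun s t => (s, a s, t)) ↔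
      ∀ s ∈ I, deriv (deriv a) s = 0) :=
  minimal_foliated_by_geodesics_general I hIo hIc a ha
end
end

section
/- A surface in Sol₃ of the form X(s,t) = (s, t, log b(s)), where b : I → ℝ is twice continuously differentiable and positive on a nonempty open interval I and t ranges over ℝ, has zero mean curvature if and only if 1/b is affine, i.e. there exist α, β ∈ ℝ with b(s)·(α·s + β) = 1 for all s ∈ I. Equivalently, the mean curvature vanishes identically if and only if b(s)·b''(s) − 2·b'(s)² = 0 on I; the nonconstant solutions are b(s) = b₀/(s + b₁). -/
open Real

noncomputable section

/-!
Along `X(s,t) = (s, t, log b(s))` the metric is `b² dx² + b⁻² dy² + dz²`, so `X_t = (0,1,0)` is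
orthogonal to `X_s = (1, 0, b'/b)` and the normal line is spanned by `(-b'/b³, 0, 1)`. For a normal
vector `n` the mean-curvature expression works out to `n₃ (b b'' - 2 b'²) / b⁴`. Since
`(1/b)'' = -(b b'' - 2 b'²) / b³`, minimality says exactly that `1/b` has vanishing second
derivative on the interval `I`, i.e. that `1/b` is affine there.
-/

section Calculus

variable {I : Set ℝ} {f : ℝ → ℝ} {x : ℝ} {n : WithTop ℕ∞}

theorem ContDiffOn.hasDerivAt_of_isOpen (hIo : IsOpen I) (hf : ContDiffOn ℝ n f I) (hn : n ≠ 0)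
    (hx : x ∈ I) : HasDerivAt f (deriv f x) x :=
  ((hf.contDiffAt (hIo.mem_nhds hx)).differentiableAt hn).hasDerivAt

theorem ContDiffOn.hasDerivAt_deriv_of_isOpen (hIo : IsOpen I) (hf : ContDiffOn ℝ n f I)
    (hn : 2 ≤ n) (hx : x ∈ I) : HasDerivAt (deriv f) (deriv (deriv f) x) x :=
  (hf.deriv_of_isOpen hIo (m := 1) hn).hasDerivAt_of_isOpen hIo one_ne_zero hx

theorem deriv_deriv_eq_zero_iff_exists_affine (hIo : IsOpen I) (hIc : I.OrdConnected)
    (hf : ContDiffOn ℝ 2 f I) :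
    (∀ x ∈ I, deriv (deriv f) x = 0) ↔ ∃ α β : ℝ, ∀ x ∈ I, f x = α * x + β := by
  constructor
  · intro hf''
    obtain ⟨α, hα⟩ := hIo.exists_is_const_of_deriv_eq_zero hIc.isPreconnected
      ((hf.deriv_of_isOpen hIo le_rfl).differentiableOn one_ne_zero) hf''
    obtain ⟨β, hβ⟩ := hIo.exists_eq_add_of_deriv_eq hIc.isPreconnected
      (hf.differentiableOn two_ne_zero) (differentiableOn_id.const_mul α)
      (fun x hx => by simp [hα x hx])
    exact ⟨α, β, hβ⟩
  · rintro ⟨α, β, hαβ⟩ x hx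
    have hf' : deriv f =ᶠ[nhds x] fun _ => α := by
      filter_upwards [hIo.mem_nhds hx] with y hy
      rw [(Filter.eventuallyEq_of_mem (hIo.mem_nhds hy) hαβ).deriv_eq]
      simp
    rw [hf'.deriv_eq, deriv_const]

theorem deriv_deriv_inv_of_contDiffOn (hIo : IsOpen I) (hf : ContDiffOn ℝ 2 f I)
    (hf0 : ∀ y ∈ I, f y ≠ 0) (hx : x ∈ I) :
    deriv (deriv fun y => (f y)⁻¹) x
      = -(f x * deriv (deriv f) x - 2 * deriv f x ^ 2) / f x ^ 3 := by
  have hinv' : deriv (fun y => (f y)⁻¹) =ᶠ[nhds x] fun y => -deriv f y / f y ^ 2 := by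
    filter_upwards [hIo.mem_nhds hx] with y hy
    exact ((hf.hasDerivAt_of_isOpen hIo two_ne_zero hy).inv (hf0 y hy)).deriv
  have hquot : HasDerivAt (fun y => -deriv f y / f y ^ 2)
      ((-deriv (deriv f) x * f x ^ 2 - -deriv f x * ((2 : ℕ) * f x ^ 1 * deriv f x))
        / (f x ^ 2) ^ 2) x :=
    ((hf.hasDerivAt_deriv_of_isOpen hIo le_rfl hx).neg).div
      ((hf.hasDerivAt_of_isOpen hIo two_ne_zero hx).pow 2) (pow_ne_zero 2 (hf0 x hx))
  rw [hinv'.deriv_eq, hquot.deriv]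
  have := hf0 x hx
  field_simp
  ring

theorem ode_iff_exists_mul_affine_eq_one (hIo : IsOpen I) (hIc : I.OrdConnected)
    (hf : ContDiffOn ℝ 2 f I) (hf0 : ∀ y ∈ I, f y ≠ 0) :
    (∀ x ∈ I, f x * deriv (deriv f) x - 2 * deriv f x ^ 2 = 0) ↔
      ∃ α β : ℝ, ∀ x ∈ I, f x * (α * x + β) = 1 :=
  calc (∀ x ∈ I, f x * deriv (deriv f) x - 2 * deriv f x ^ 2 = 0)
      ↔ ∀ x ∈ I, deriv (deriv fun y => (f y)⁻¹) x = 0 := forall₂_congr fun x hx => by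
        rw [deriv_deriv_inv_of_contDiffOn hIo hf hf0 hx, neg_div, neg_eq_zero,
          div_eq_zero_iff, or_iff_left (pow_ne_zero 3 (hf0 x hx))]
    _ ↔ ∃ α β : ℝ, ∀ x ∈ I, (f x)⁻¹ = α * x + β :=
        deriv_deriv_eq_zero_iff_exists_affine hIo hIc (hf.inv hf0)
    _ ↔ ∃ α β : ℝ, ∀ x ∈ I, f x * (α * x + β) = 1 :=
        exists₂_congr fun α β => forall₂_congr fun x hx => (mul_eq_one_iff_inv_eq₀ (hf0 x hx)).symm

end Calculus

def logGraph (b : ℝ → ℝ) : ℝ → ℝ → V3 := fun s t => (s, t, log (b s))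

def meanCurvatureForm (X : ℝ → ℝ → V3) (s t : ℝ) (n : V3) : ℝ :=
  gSol (X s t) (pXs X s t) (pXs X s t) * gSol (X s t) (Stt X s t) n
    - 2 * gSol (X s t) (pXs X s t) (pXt X s t) * gSol (X s t) (Sst X s t) n
    + gSol (X s t) (pXt X s t) (pXt X s t) * gSol (X s t) (Sss X s t) n

namespace logGraph

variable {I : Set ℝ} {b : ℝ → ℝ} {s : ℝ}

theorem exp_two_mul_log_eq (hbs : 0 < b s) (t : ℝ) :
    exp (2 * (logGraph b s t).2.2) = b s ^ 2 := by
  rw [logGraph, mul_comm, exp_mul, exp_log hbs, rpow_two]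

theorem gSol_eq (hbs : 0 < b s) (t : ℝ) (u v : V3) :
    gSol (logGraph b s t) u v = b s ^ 2 * u.1 * v.1 + u.2.1 * v.2.1 / b s ^ 2 + u.2.2 * v.2.2 := by
  simp only [gSol, exp_neg, exp_two_mul_log_eq hbs]
  ring

theorem pXt_eq (t : ℝ) : pXt (logGraph b) s t = (0, 1, 0) :=
  ((hasDerivAt_const t s).prodMk ((hasDerivAt_id t).prodMk (hasDerivAt_const t _))).deriv

theorem pXs_eq (hIo : IsOpen I) (hb : ContDiffOn ℝ 2 b I) (hbpos : ∀ x ∈ I, 0 < b x)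
    (hs : s ∈ I) (t : ℝ) : pXs (logGraph b) s t = (1, 0, deriv b s / b s) :=
  ((hasDerivAt_id s).prodMk ((hasDerivAt_const s t).prodMk
    ((hb.hasDerivAt_of_isOpen hIo two_ne_zero hs).log (hbpos s hs).ne'))).deriv

theorem Sss_eq (hIo : IsOpen I) (hb : ContDiffOn ℝ 2 b I) (hbpos : ∀ x ∈ I, 0 < b x)
    (hs : s ∈ I) (t : ℝ) :
    Sss (logGraph b) s t = (2 * deriv b s / b s, 0,
      (deriv (deriv b) s * b s - deriv b s ^ 2) / b s ^ 2 - b s ^ 2) := by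
  have hXs : (fun x => pXs (logGraph b) x t) =ᶠ[nhds s]
      fun x => ((1 : ℝ), (0 : ℝ), deriv b x / b x) :=
    Filter.eventuallyEq_of_mem (hIo.mem_nhds hs) fun x hx => pXs_eq hIo hb hbpos hx t
  have hXss : HasDerivAt (fun x => ((1 : ℝ), (0 : ℝ), deriv b x / b x))
      (0, 0, (deriv (deriv b) s * b s - deriv b s * deriv b s) / b s ^ 2) s :=
    (hasDerivAt_const s _).prodMk ((hasDerivAt_const s _).prodMk
      ((hb.hasDerivAt_deriv_of_isOpen hIo le_rfl hs).div
        (hb.hasDerivAt_of_isOpen hIo two_ne_zero hs) (hbpos s hs).ne'))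
  have := (hbpos s hs).ne'
  simp only [Sss, hXs.deriv_eq, hXss.deriv, GammaSol, pXs_eq hIo hb hbpos hs,
    exp_two_mul_log_eq (hbpos s hs), Prod.mk_add_mk, Prod.mk.injEq]
  refine ⟨by ring, by ring, by field_simp; ring⟩

theorem Stt_eq (hbs : 0 < b s) (t : ℝ) : Stt (logGraph b) s t = (0, 0, 1 / b s ^ 2) := by
  simp only [Stt, pXt_eq, deriv_const', GammaSol, exp_neg, exp_two_mul_log_eq hbs, zero_add]
  ext <;> simp

/-- `F = g(X_s, X_t)` vanishes, so `S_st` does not enter. -/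
theorem meanCurvatureForm_eq (hIo : IsOpen I) (hb : ContDiffOn ℝ 2 b I)
    (hbpos : ∀ x ∈ I, 0 < b x) (hs : s ∈ I) (t : ℝ) (n : V3)
    (hns : gSol (logGraph b s t) n (pXs (logGraph b) s t) = 0) :
    meanCurvatureForm (logGraph b) s t n
      = n.2.2 * (b s * deriv (deriv b) s - 2 * deriv b s ^ 2) / b s ^ 4 := by
  have hbs := hbpos s hs
  have hn1 : b s ^ 3 * n.1 = -deriv b s * n.2.2 := by
    simp only [gSol_eq hbs, pXs_eq hIo hb hbpos hs, mul_one, mul_zero, zero_div, add_zero] at hns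
    field_simp at hns
    linear_combination hns
  simp only [meanCurvatureForm, gSol_eq hbs, pXs_eq hIo hb hbpos hs, pXt_eq,
    Sss_eq hIo hb hbpos hs, Stt_eq hbs]
  field_simp
  linear_combination (2 * deriv b s) * hn1

theorem meanZero_iff_ode (hIo : IsOpen I) (hb : ContDiffOn ℝ 2 b I)
    (hbpos : ∀ x ∈ I, 0 < b x) {J : Set ℝ} (hJ : J.Nonempty) :
    MeanZero I J (logGraph b) ↔ ∀ s ∈ I, b s * deriv (deriv b) s - 2 * deriv b s ^ 2 = 0 := by
  constructor
  · intro hmin s hs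
    obtain ⟨t, ht⟩ := hJ
    have hbs := hbpos s hs
    set n : V3 := (-deriv b s / b s ^ 3, 0, 1)
    have hns : gSol (logGraph b s t) n (pXs (logGraph b) s t) = 0 := by
      simp only [n, gSol_eq hbs, pXs_eq hIo hb hbpos hs]
      field_simp
      ring
    have hnt : gSol (logGraph b s t) n (pXt (logGraph b) s t) = 0 := by
      simp [n, gSol_eq hbs, pXt_eq]
    have hform : meanCurvatureForm (logGraph b) s t n = 0 := hmin s hs t ht n hns hnt
    rw [meanCurvatureForm_eq hIo hb hbpos hs t n hns, one_mul, div_eq_zero_iff] at hform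
    exact hform.resolve_right (pow_ne_zero 4 hbs.ne')
  · intro hode s hs t _ n hns _
    change meanCurvatureForm (logGraph b) s t n = 0
    rw [meanCurvatureForm_eq hIo hb hbpos hs t n hns, hode s hs, mul_zero, zero_div]

end logGraph

theorem minimal_T2_invariant_equidistant_general
    (I : Set ℝ) (hIo : IsOpen I) (hIc : I.OrdConnected)
    (b : ℝ → ℝ) (hb : ContDiffOn ℝ 2 b I) (hbpos : ∀ s ∈ I, 0 < b s) :
    (MeanZero I Set.univ (fun s t => (s, t, log (b s))) ↔
      ∃ α β : ℝ, ∀ s ∈ I, b s * (α * s + β) = 1) ∧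
    (MeanZero I Set.univ (fun s t => (s, t, log (b s))) ↔
      ∀ s ∈ I, b s * deriv (deriv b) s - 2 * (deriv b s) ^ 2 = 0) := by
  have hode := logGraph.meanZero_iff_ode hIo hb hbpos Set.univ_nonempty
  exact ⟨hode.trans (ode_iff_exists_mul_affine_eq_one hIo hIc hb fun s hs => (hbpos s hs).ne'),
    hode⟩

/-- The surface `X(s,t) = (s, t, log b(s))` has zero mean curvature
iff `1/b` is affine, equivalently iff `b·b'' - 2·b'² = 0` on `I`. -/
theorem minimal_T2_invariant_equidistant
    (I : Set ℝ) (hIo : IsOpen I) (hIne : I.Nonempty) (hIc : I.OrdConnected)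
    (b : ℝ → ℝ) (hb : ContDiffOn ℝ 2 b I) (hbpos : ∀ s ∈ I, 0 < b s) :
    (MeanZero I Set.univ (fun s t => (s, t, log (b s))) ↔
      ∃ α β : ℝ, ∀ s ∈ I, b s * (α * s + β) = 1) ∧
    (MeanZero I Set.univ (fun s t => (s, t, log (b s))) ↔
      ∀ s ∈ I, b s * deriv (deriv b) s - 2 * (deriv b s) ^ 2 = 0) :=
  minimal_T2_invariant_equidistant_general I hIo hIc b hb hbpos
end
end

section
/- A cyclic surface in Sol₃ foliated by equidistant lines of the form X(s,t) = (s, t, log(a(s)·t)), where a : I → ℝ is twice continuously differentiable and positive on a nonempty open interval I and t ranges over a nonempty open interval J ⊆ (0,∞), has zero mean curvature if and only if 1/a is affine, i.e. there exist α, β ∈ ℝ with a(s)·(α·s + β) = 1 for all s ∈ I. Equivalently, the mean curvature vanishes identically if and only if a(s)·a''(s) − 2·a'(s)² = 0 on I; the nonconstant solutions are a(s) = a₀/(s + a₁). -/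
/-!
At a point of `X(s,t) = (s, t, log (a s * t))` the normal line is spanned by
`(-a'/(a³t²), -a²t, 1)`, and for every normal vector `n` the mean curvature expression equals
`n₃ · (1 + a²)/(a⁴t²) · (a a'' - 2a'²)`; so `X` is minimal iff `a a'' = 2a'²` on `I`.
Since `(1/a)'' = (2a'² - a a'')/a³`, this ODE says that `1/a` has vanishing second derivative
on the interval `I`, i.e. that `1/a` is affine there.
-/

open Real

noncomputable section

theorem IsOpen.forall_deriv_deriv_eq_zero_iff_exists_affine {s : Set ℝ} {f : ℝ → ℝ}
    (hs : IsOpen s) (hs' : IsPreconnected s) (hf : ContDiffOn ℝ 2 f s) :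
    (∀ x ∈ s, deriv (deriv f) x = 0) ↔ ∃ α β : ℝ, ∀ x ∈ s, f x = α * x + β := by
  have hf₂ : ∀ x ∈ s, ContDiffAt ℝ 2 f x := fun x hx => hf.contDiffAt (hs.mem_nhds hx)
  constructor
  · intro hf''
    obtain ⟨α, hα⟩ := hs.exists_is_const_of_deriv_eq_zero hs'
      (fun x hx => ((hf₂ x hx).derivWithin (m := 1) le_rfl).differentiableAt one_ne_zero
        |>.differentiableWithinAt) hf''
    obtain ⟨β, hβ⟩ := hs.exists_eq_add_of_deriv_eq (g := fun x => α * x) hs'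
      (fun x hx => ((hf₂ x hx).differentiableAt two_ne_zero).differentiableWithinAt)
      (differentiable_id.const_mul α).differentiableOn
      (fun x hx => by simp [hα x hx])
    exact ⟨α, β, hβ⟩
  · rintro ⟨α, β, hαβ⟩ x hx
    have hfx : f =ᶠ[nhds x] fun y => α * y + β :=
      Filter.eventually_of_mem (hs.mem_nhds hx) hαβ
    have hderiv : deriv (fun y => α * y + β) = fun _ => α := by
      funext y
      simp
    rw [hfx.deriv.deriv_eq, hderiv, deriv_const]

theorem deriv_deriv_inv {a : ℝ → ℝ} {x : ℝ} (ha : ContDiffAt ℝ 2 a x) (hx : a x ≠ 0) :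
    deriv (deriv a⁻¹) x = (2 * deriv a x ^ 2 - a x * deriv (deriv a) x) / a x ^ 3 := by
  have hinv : deriv a⁻¹ =ᶠ[nhds x] fun y => -deriv a y / a y ^ 2 := by
    filter_upwards [ha.eventually (by simp), ha.continuousAt.eventually_ne hx] with y hy hy0
    exact deriv_inv'' (hy.differentiableAt two_ne_zero) hy0
  have ha' : HasDerivAt a (deriv a x) x := (ha.differentiableAt two_ne_zero).hasDerivAt
  have ha'' : HasDerivAt (deriv a) (deriv (deriv a) x) x :=
    ((ha.derivWithin (m := 1) le_rfl).differentiableAt one_ne_zero).hasDerivAt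
  have hd : HasDerivAt (fun y => -deriv a y / a y ^ 2) _ x :=
    ha''.neg.div (ha'.pow 2) (pow_ne_zero 2 hx)
  rw [hinv.deriv_eq, hd.deriv, Pi.neg_apply]
  field_simp
  ring

theorem forall_mul_deriv_deriv_sub_two_mul_sq_eq_zero_iff {I : Set ℝ} {a : ℝ → ℝ}
    (hI : IsOpen I) (hI' : IsPreconnected I) (ha : ContDiffOn ℝ 2 a I) (ha0 : ∀ s ∈ I, a s ≠ 0) :
    (∀ s ∈ I, a s * deriv (deriv a) s - 2 * deriv a s ^ 2 = 0) ↔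
      ∃ α β : ℝ, ∀ s ∈ I, a s * (α * s + β) = 1 := by
  have hode : ∀ s ∈ I, (a s * deriv (deriv a) s - 2 * deriv a s ^ 2 = 0 ↔
      deriv (deriv a⁻¹) s = 0) := fun s hs => by
    rw [deriv_deriv_inv (ha.contDiffAt (hI.mem_nhds hs)) (ha0 s hs), div_eq_zero_iff,
      or_iff_left (pow_ne_zero 3 (ha0 s hs)), ← neg_eq_zero, neg_sub]
  rw [forall₂_congr hode, hI.forall_deriv_deriv_eq_zero_iff_exists_affine hI' (ha.inv ha0)]
  exact exists₂_congr fun α β => forall₂_congr fun s hs =>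
    (mul_eq_one_iff_inv_eq₀ (ha0 s hs)).symm

theorem Real.exp_two_mul_log {x : ℝ} (hx : x ≠ 0) : exp (2 * log x) = x ^ 2 := by
  have h2 : log (x ^ 2) = 2 * log x := by simp [log_pow]
  rw [← h2, exp_log (by positivity)]

def foliatedSurface (a : ℝ → ℝ) (s t : ℝ) : V3 := (s, t, log (a s * t))

theorem meanZero_iff {I J : Set ℝ} {X : ℝ → ℝ → V3} :
    MeanZero I J X ↔ ∀ s ∈ I, ∀ t ∈ J, ∀ n : V3, gSol (X s t) n (pXs X s t) = 0 →
      gSol (X s t) n (pXt X s t) = 0 → meanCurvatureForm X s t n = 0 :=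
  Iff.rfl

section foliatedSurface

variable {a : ℝ → ℝ} {s t : ℝ}

theorem pXs_foliatedSurface {a' : ℝ} (ha : HasDerivAt a a' s) (hs : a s ≠ 0) (ht : t ≠ 0) :
    pXs (foliatedSurface a) s t = (1, 0, a' / a s) := by
  have h : HasDerivAt (fun s' => foliatedSurface a s' t) (1, 0, a' * t / (a s * t)) s :=
    (hasDerivAt_id s).prodMk ((hasDerivAt_const s t).prodMk
      ((ha.mul_const t).log (mul_ne_zero hs ht)))
  rw [pXs, h.deriv, mul_div_mul_right _ _ ht]

theorem pXt_foliatedSurface (hs : a s ≠ 0) (ht : t ≠ 0) :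
    pXt (foliatedSurface a) s t = (0, 1, t⁻¹) := by
  have h : HasDerivAt (fun t' => foliatedSurface a s t') (0, 1, a s * 1 / (a s * t)) t :=
    (hasDerivAt_const t s).prodMk ((hasDerivAt_id t).prodMk
      (((hasDerivAt_id t).const_mul (a s)).log (mul_ne_zero hs ht)))
  rw [pXt, h.deriv, mul_one, div_mul_cancel_left₀ hs]

theorem pXss_foliatedSurface (ha : ContDiffAt ℝ 2 a s) (hs : a s ≠ 0) (ht : t ≠ 0) :
    deriv (fun s' => pXs (foliatedSurface a) s' t) s
      = (0, 0, (a s * deriv (deriv a) s - deriv a s ^ 2) / a s ^ 2) := by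
  have hpXs : (fun s' => pXs (foliatedSurface a) s' t)
      =ᶠ[nhds s] fun s' => (1, 0, deriv a s' / a s') := by
    filter_upwards [ha.eventually (by simp), ha.continuousAt.eventually_ne hs] with x hx hx0
    exact pXs_foliatedSurface (hx.differentiableAt two_ne_zero).hasDerivAt hx0 ht
  have ha' : HasDerivAt a (deriv a s) s := (ha.differentiableAt two_ne_zero).hasDerivAt
  have ha'' : HasDerivAt (deriv a) (deriv (deriv a) s) s :=
    ((ha.derivWithin (m := 1) le_rfl).differentiableAt one_ne_zero).hasDerivAt
  have hd : HasDerivAt (fun s' => ((1 : ℝ), (0 : ℝ), deriv a s' / a s')) _ s :=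
    (hasDerivAt_const s 1).prodMk ((hasDerivAt_const s 0).prodMk (ha''.div ha' hs))
  rw [hpXs.deriv_eq, hd.deriv]
  congr 3
  ring

theorem pXst_foliatedSurface (ha : DifferentiableAt ℝ a s) (hs : a s ≠ 0) (ht : t ≠ 0) :
    deriv (fun t' => pXs (foliatedSurface a) s t') t = 0 := by
  have hpXs : (fun t' => pXs (foliatedSurface a) s t')
      =ᶠ[nhds t] fun _ => (1, 0, deriv a s / a s) := by
    filter_upwards [isOpen_ne.mem_nhds ht] with x hx
    exact pXs_foliatedSurface ha.hasDerivAt hs hx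
  rw [hpXs.deriv_eq, deriv_const]

theorem pXtt_foliatedSurface (hs : a s ≠ 0) (ht : t ≠ 0) :
    deriv (fun t' => pXt (foliatedSurface a) s t') t = (0, 0, -(t ^ 2)⁻¹) := by
  have hpXt : (fun t' => pXt (foliatedSurface a) s t')
      =ᶠ[nhds t] fun t' => (0, 1, t'⁻¹) := by
    filter_upwards [isOpen_ne.mem_nhds ht] with x hx
    exact pXt_foliatedSurface hs hx
  rw [hpXt.deriv_eq, ((hasDerivAt_const t (0 : ℝ)).prodMk
    ((hasDerivAt_const t (1 : ℝ)).prodMk (hasDerivAt_inv ht))).deriv]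

theorem gSol_foliatedSurface (hs : a s ≠ 0) (ht : t ≠ 0) (u v : V3) :
    gSol (foliatedSurface a s t) u v
      = (a s * t) ^ 2 * u.1 * v.1 + ((a s * t) ^ 2)⁻¹ * u.2.1 * v.2.1 + u.2.2 * v.2.2 := by
  rw [gSol, foliatedSurface, exp_neg, exp_two_mul_log (mul_ne_zero hs ht)]

theorem GammaSol_foliatedSurface (hs : a s ≠ 0) (ht : t ≠ 0) (u v : V3) :
    GammaSol (foliatedSurface a s t) u v
      = (u.1 * v.2.2 + u.2.2 * v.1, -(u.2.1 * v.2.2 + u.2.2 * v.2.1),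
          -(a s * t) ^ 2 * u.1 * v.1 + ((a s * t) ^ 2)⁻¹ * u.2.1 * v.2.1) := by
  rw [GammaSol, foliatedSurface, exp_neg, exp_two_mul_log (mul_ne_zero hs ht)]

theorem meanCurvatureForm_foliatedSurface (ha : ContDiffAt ℝ 2 a s) (hs : a s ≠ 0)
    (ht : t ≠ 0) {n : V3}
    (hn₁ : gSol (foliatedSurface a s t) n (pXs (foliatedSurface a) s t) = 0)
    (hn₂ : gSol (foliatedSurface a s t) n (pXt (foliatedSurface a) s t) = 0) :
    meanCurvatureForm (foliatedSurface a) s t n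
      = n.2.2 * ((1 + a s ^ 2) / (a s ^ 4 * t ^ 2))
          * (a s * deriv (deriv a) s - 2 * deriv a s ^ 2) := by
  obtain ⟨n₁, n₂, n₃⟩ := n
  simp only [meanCurvatureForm, Sss, Sst, Stt, gSol_foliatedSurface hs ht,
    GammaSol_foliatedSurface hs ht, pXss_foliatedSurface ha hs ht,
    pXst_foliatedSurface (ha.differentiableAt two_ne_zero) hs ht, pXtt_foliatedSurface hs ht,
    pXs_foliatedSurface (ha.differentiableAt two_ne_zero).hasDerivAt hs ht,
    pXt_foliatedSurface hs ht, Prod.mk_add_mk, zero_add, mul_zero, mul_one, add_zero,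
    zero_mul] at hn₁ hn₂ ⊢
  field_simp at hn₁ hn₂
  obtain rfl : n₁ = -(n₃ * deriv a s) / (a s ^ 3 * t ^ 2) := by
    rw [eq_div_iff (by positivity)]
    linear_combination hn₁
  obtain rfl : n₂ = -(a s ^ 2 * t * n₃) := by linear_combination hn₂
  field_simp
  ring

theorem exists_normal_foliatedSurface (ha : DifferentiableAt ℝ a s) (hs : a s ≠ 0)
    (ht : t ≠ 0) :
    ∃ n : V3, n.2.2 = 1 ∧ gSol (foliatedSurface a s t) n (pXs (foliatedSurface a) s t) = 0 ∧
      gSol (foliatedSurface a s t) n (pXt (foliatedSurface a) s t) = 0 := by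
  refine ⟨(-deriv a s / (a s ^ 3 * t ^ 2), -(a s ^ 2 * t), 1), rfl, ?_, ?_⟩ <;>
  · simp only [gSol_foliatedSurface hs ht, pXs_foliatedSurface ha.hasDerivAt hs ht,
      pXt_foliatedSurface hs ht]
    field_simp
    ring

theorem meanZero_foliatedSurface_iff {I J : Set ℝ} (hI : IsOpen I) (hJ : J.Nonempty)
    (hJ0 : (0 : ℝ) ∉ J) (ha : ContDiffOn ℝ 2 a I) (ha0 : ∀ s ∈ I, a s ≠ 0) :
    MeanZero I J (foliatedSurface a) ↔
      ∀ s ∈ I, a s * deriv (deriv a) s - 2 * deriv a s ^ 2 = 0 := by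
  have ha₂ : ∀ s ∈ I, ContDiffAt ℝ 2 a s := fun s hs => ha.contDiffAt (hI.mem_nhds hs)
  have hJ0' : ∀ t ∈ J, t ≠ 0 := fun t ht h => hJ0 (h ▸ ht)
  rw [meanZero_iff]
  constructor
  · intro h s hs
    obtain ⟨t, ht⟩ := hJ
    have hs0 := ha0 s hs
    have ht0 := hJ0' t ht
    obtain ⟨n, hn₃, hn₁, hn₂⟩ :=
      exists_normal_foliatedSurface ((ha₂ s hs).differentiableAt two_ne_zero) hs0 ht0
    have hform := h s hs t ht n hn₁ hn₂
    rw [meanCurvatureForm_foliatedSurface (ha₂ s hs) hs0 ht0 hn₁ hn₂, hn₃, one_mul] at hform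
    exact (mul_eq_zero.mp hform).resolve_left (by positivity)
  · intro h s hs t ht n hn₁ hn₂
    rw [meanCurvatureForm_foliatedSurface (ha₂ s hs) (ha0 s hs) (hJ0' t ht) hn₁ hn₂, h s hs,
      mul_zero]

end foliatedSurface

theorem minimal_foliated_by_equidistant_lines_general
    (I J : Set ℝ) (hIo : IsOpen I) (hIc : I.OrdConnected)
    (hJne : J.Nonempty)
    (hJpos : J ⊆ Set.Ioi (0 : ℝ))
    (a : ℝ → ℝ) (ha : ContDiffOn ℝ 2 a I) (hapos : ∀ s ∈ I, 0 < a s) :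
    (MeanZero I J (fun s t => (s, t, log (a s * t))) ↔
      ∃ α β : ℝ, ∀ s ∈ I, a s * (α * s + β) = 1) ∧
    (MeanZero I J (fun s t => (s, t, log (a s * t))) ↔
      ∀ s ∈ I, a s * deriv (deriv a) s - 2 * (deriv a s) ^ 2 = 0) := by
  have ha0 : ∀ s ∈ I, a s ≠ 0 := fun s hs => (hapos s hs).ne'
  have hminimal :=
    meanZero_foliatedSurface_iff hIo hJne (fun h => lt_irrefl (0 : ℝ) (hJpos h)) ha ha0
  exact ⟨hminimal.trans (forall_mul_deriv_deriv_sub_two_mul_sq_eq_zero_iff hIo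
    hIc.isPreconnected ha ha0), hminimal⟩

/-- The cyclic surface `X(s,t) = (s, t, log(a(s)·t))` foliated by
equidistant lines has zero mean curvature iff `1/a` is affine,
equivalently iff `a·a'' - 2·a'² = 0` on `I`. -/
theorem minimal_foliated_by_equidistant_lines
    (I J : Set ℝ) (hIo : IsOpen I) (hIne : I.Nonempty) (hIc : I.OrdConnected)
    (hJo : IsOpen J) (hJne : J.Nonempty) (hJc : J.OrdConnected)
    (hJpos : J ⊆ Set.Ioi (0 : ℝ))
    (a : ℝ → ℝ) (ha : ContDiffOn ℝ 2 a I) (hapos : ∀ s ∈ I, 0 < a s) :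
    (MeanZero I J (fun s t => (s, t, log (a s * t))) ↔
      ∃ α β : ℝ, ∀ s ∈ I, a s * (α * s + β) = 1) ∧
    (MeanZero I J (fun s t => (s, t, log (a s * t))) ↔
      ∀ s ∈ I, a s * deriv (deriv a) s - 2 * (deriv a s) ^ 2 = 0) :=
  minimal_foliated_by_equidistant_lines_general I J hIo hIc hJne hJpos a ha hapos
end
end

section
/- A cyclic surface in Sol₃ foliated by geodesics of the planes x = const of the form X(s,t) = (s, a(s), t), where a : I → ℝ is twice continuously differentiable on a nonempty open interval I and t ranges over ℝ, has zero Gaussian curvature if and only if a is constant on I (so the surface is a totally geodesic plane y = const). Equivalently, the Gaussian curvature vanishes identically if and only if a'(s) = 0 on I. -/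
open Real

noncomputable section

/-!
Along `X(s,t) = (s, a(s), t)` one has `X_s = (1, a', 0)` and `X_t = (0, 0, 1)`, so
`S_tt = 0` and `S_st = Γ(X_s, X_t) = (1, -a', 0)`. Hence the Gauss condition reduces to
`g(S_st, n) = 0` for normal `n`, and for such `n` normality gives
`g(S_st, n) = -2 e^{-2t} a' n₂`, which vanishes for all normals exactly when `a' = 0`.
On an open interval this is the same as `a` being constant.
-/

theorem IsOpen.forall_deriv_eq_zero_iff_exists_const {𝕜 F : Type*} [RCLike 𝕜]
    [NormedAddCommGroup F] [NormedSpace 𝕜 F] {I : Set 𝕜} {a : 𝕜 → F} (hIo : IsOpen I)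
    (hI : IsPreconnected I) (ha : DifferentiableOn 𝕜 a I) :
    (∀ s ∈ I, deriv a s = 0) ↔ ∃ c, ∀ s ∈ I, a s = c := by
  refine ⟨fun h => hIo.exists_is_const_of_deriv_eq_zero hI ha h, ?_⟩
  rintro ⟨c, hc⟩ s hs
  have hconst : a =ᶠ[nhds s] fun _ => c := Filter.eventuallyEq_of_mem (hIo.mem_nhds hs) hc
  simp [hconst.deriv_eq]

lemma gSol_zero_left (p v : V3) : gSol p 0 v = 0 := by
  simp [gSol]

namespace CylinderOverGraph

variable {a : ℝ → ℝ} {s t : ℝ}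

lemma pXs_eq (ha : DifferentiableAt ℝ a s) (t : ℝ) :
    pXs (fun s t => (s, a s, t)) s t = (1, deriv a s, 0) :=
  ((hasDerivAt_id s).prodMk (ha.hasDerivAt.prodMk (hasDerivAt_const s t))).deriv

lemma pXt_eq (a : ℝ → ℝ) (s t : ℝ) : pXt (fun s t => (s, a s, t)) s t = (0, 0, 1) :=
  ((hasDerivAt_const t s).prodMk ((hasDerivAt_const t (a s)).prodMk (hasDerivAt_id t))).deriv

lemma Stt_eq (a : ℝ → ℝ) (s t : ℝ) : Stt (fun s t => (s, a s, t)) s t = 0 := by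
  simp [Stt, pXt_eq, GammaSol]

lemma Sst_eq (ha : DifferentiableAt ℝ a s) (t : ℝ) :
    Sst (fun s t => (s, a s, t)) s t = (1, -deriv a s, 0) := by
  simp [Sst, pXs_eq ha, pXt_eq, GammaSol]

lemma gSol_Sst_of_normal (ha : DifferentiableAt ℝ a s) {n : V3}
    (hn : gSol (s, a s, t) n (pXs (fun s t => (s, a s, t)) s t) = 0) :
    gSol (s, a s, t) (Sst (fun s t => (s, a s, t)) s t) n =
      -2 * exp (-(2 * t)) * deriv a s * n.2.1 := by
  rw [pXs_eq ha] at hn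
  rw [Sst_eq ha]
  simp only [gSol] at hn ⊢
  linarith

theorem gaussZero_iff {I J : Set ℝ} (ha : ∀ s ∈ I, DifferentiableAt ℝ a s) (hJ : J.Nonempty) :
    GaussZero I J (fun s t => (s, a s, t)) ↔ ∀ s ∈ I, deriv a s = 0 := by
  constructor
  · intro hG s hs
    obtain ⟨t, ht⟩ := hJ
    -- a normal vector with `n₂ = e^{2t}`, so that `g(S_st, n) = -2 a'`
    have hnormal : gSol (s, a s, t) (-deriv a s * exp (-(2 * t)), exp (2 * t), 0)
        (pXs (fun s t => (s, a s, t)) s t) = 0 := by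
      rw [pXs_eq (ha s hs)]
      simp only [gSol]
      ring
    have h := hG s hs t ht _ hnormal (by simp [pXt_eq, gSol])
    rw [Stt_eq, gSol_Sst_of_normal (ha s hs) hnormal, gSol_zero_left, mul_zero, zero_sub,
      neg_eq_zero] at h
    simpa [exp_ne_zero] using pow_eq_zero_iff two_ne_zero |>.mp h
  · intro hz s hs t _ n hns _
    rw [Stt_eq, gSol_Sst_of_normal (ha s hs) hns, hz s hs, gSol_zero_left]
    ring

end CylinderOverGraph

theorem flat_foliated_by_geodesics_general
    (I : Set ℝ) (hIo : IsOpen I) (hIc : I.OrdConnected)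
    (a : ℝ → ℝ) (ha : ContDiffOn ℝ 2 a I) :
    (GaussZero I Set.univ (fun s t => (s, a s, t)) ↔
      ∃ c : ℝ, ∀ s ∈ I, a s = c) ∧
    (GaussZero I Set.univ (fun s t => (s, a s, t)) ↔
      ∀ s ∈ I, deriv a s = 0) := by
  have hdiff : DifferentiableOn ℝ a I := ha.differentiableOn two_ne_zero
  have hgauss := CylinderOverGraph.gaussZero_iff
    (fun s hs => hdiff.differentiableAt (hIo.mem_nhds hs)) Set.univ_nonempty
  exact ⟨hgauss.trans (hIo.forall_deriv_eq_zero_iff_exists_const hIc.isPreconnected hdiff), hgauss⟩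

/-- The cyclic surface `X(s,t) = (s, a(s), t)` foliated by geodesics
has zero Gaussian curvature iff `a` is constant, equivalently iff `a' = 0` on `I`. -/
theorem flat_foliated_by_geodesics
    (I : Set ℝ) (hIo : IsOpen I) (hIne : I.Nonempty) (hIc : I.OrdConnected)
    (a : ℝ → ℝ) (ha : ContDiffOn ℝ 2 a I) :
    (GaussZero I Set.univ (fun s t => (s, a s, t)) ↔
      ∃ c : ℝ, ∀ s ∈ I, a s = c) ∧
    (GaussZero I Set.univ (fun s t => (s, a s, t)) ↔
      ∀ s ∈ I, deriv a s = 0) :=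
  flat_foliated_by_geodesics_general I hIo hIc a ha
end
end

section
/- For any constants c ∈ ℝ and r > 0, the cyclic surface in Sol₃ foliated by geodesics parametrized by X(s,t) = (s, c + r·cos t, log(r·sin t)), with s ∈ ℝ and t ∈ (0, π), has zero Gaussian curvature: for every (s,t) ∈ ℝ × (0,π) and every n ∈ ℝ³ with g_X(n, X_s) = g_X(n, X_t) = 0, one has g_X(S_ss, n)·g_X(S_tt, n) − g_X(S_st, n)² = 0. -/
open Real

noncomputable section

/-!
Along the curves `t ↦ X(s,t)` one finds `S_tt = -cot t · X_t`, so they are pregeodesics,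
and `S_st = cot t · X_s`. Both second-order quantities are therefore tangent to the surface,
their normal components `g(S_st, n)` and `g(S_tt, n)` vanish, and so does
`g(S_ss, n) g(S_tt, n) - g(S_st, n)²`.
-/

theorem gSol_comm (p u v : V3) : gSol p u v = gSol p v u := by
  simp only [gSol]; ring

theorem gSol_smul_add_smul (p u w n : V3) (a b : ℝ) :
    gSol p (a • u + b • w) n = a * gSol p u n + b * gSol p w n := by
  simp only [gSol, Prod.fst_add, Prod.snd_add, Prod.smul_fst, Prod.smul_snd, smul_eq_mul]; ring

theorem gSol_eq_zero_of_mem_span_pair {p u w n v : V3} (hu : gSol p n u = 0)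
    (hw : gSol p n w = 0) (hv : v ∈ Submodule.span ℝ {u, w}) : gSol p v n = 0 := by
  obtain ⟨a, b, rfl⟩ := Submodule.mem_span_pair.mp hv
  rw [gSol_smul_add_smul, gSol_comm p u, gSol_comm p w, hu, hw]; ring

def tangentPlane (X : ℝ → ℝ → V3) (s t : ℝ) : Submodule ℝ V3 :=
  Submodule.span ℝ {pXs X s t, pXt X s t}

theorem gaussZero_of_Sst_mem_of_Stt_mem {I J : Set ℝ} {X : ℝ → ℝ → V3}
    (hst : ∀ s ∈ I, ∀ t ∈ J, Sst X s t ∈ tangentPlane X s t)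
    (htt : ∀ s ∈ I, ∀ t ∈ J, Stt X s t ∈ tangentPlane X s t) : GaussZero I J X := by
  intro s hs t ht n hn₁ hn₂
  rw [gSol_eq_zero_of_mem_span_pair hn₁ hn₂ (htt s hs t ht),
    gSol_eq_zero_of_mem_span_pair hn₁ hn₂ (hst s hs t ht)]
  ring

def cyclicSurface (c r : ℝ) (s t : ℝ) : V3 := (s, c + r * cos t, log (r * sin t))

section cyclicSurface

variable {c r : ℝ}

theorem pXs_cyclicSurface (s t : ℝ) : pXs (cyclicSurface c r) s t = (1, 0, 0) :=
  ((hasDerivAt_id s).prodMk ((hasDerivAt_const s _).prodMk (hasDerivAt_const s _))).deriv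

theorem hasDerivAt_cyclicSurface (hr : r ≠ 0) (s : ℝ) {t : ℝ} (ht : sin t ≠ 0) :
    HasDerivAt (cyclicSurface c r s) (0, -(r * sin t), cos t / sin t) t := by
  have hy : HasDerivAt (fun u => c + r * cos u) (-(r * sin t)) t := by
    simpa using ((hasDerivAt_cos t).const_mul r).const_add c
  have hz : HasDerivAt (fun u => log (r * sin u)) (cos t / sin t) t := by
    simpa [mul_div_mul_left _ _ hr] using ((hasDerivAt_sin t).const_mul r).log (mul_ne_zero hr ht)
  exact (hasDerivAt_const t s).prodMk (hy.prodMk hz)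

theorem pXt_cyclicSurface (hr : r ≠ 0) (s : ℝ) {t : ℝ} (ht : sin t ≠ 0) :
    pXt (cyclicSurface c r) s t = (0, -(r * sin t), cos t / sin t) :=
  (hasDerivAt_cyclicSurface hr s ht).deriv

theorem deriv_pXt_cyclicSurface (hr : r ≠ 0) (s : ℝ) {t : ℝ} (ht : sin t ≠ 0) :
    deriv (fun t' => pXt (cyclicSurface c r) s t') t
      = (0, -(r * cos t), (-sin t * sin t - cos t * cos t) / sin t ^ 2) := by
  have hpXt : (fun t' => pXt (cyclicSurface c r) s t')
      =ᶠ[nhds t] fun t' => (0, -(r * sin t'), cos t' / sin t') := by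
    filter_upwards [continuous_sin.continuousAt.eventually_ne ht] with t' ht'
    exact pXt_cyclicSurface hr s ht'
  rw [hpXt.deriv_eq]
  exact ((hasDerivAt_const t 0).prodMk (((hasDerivAt_sin t).const_mul r).neg.prodMk
    ((hasDerivAt_cos t).div (hasDerivAt_sin t) ht))).deriv

theorem exp_two_mul_cyclicSurface {t : ℝ} (hrt : 0 < r * sin t) (s : ℝ) :
    exp (2 * (cyclicSurface c r s t).2.2) = (r * sin t) ^ 2 := by
  rw [cyclicSurface, two_mul, exp_add, exp_log hrt, sq]

theorem Sst_cyclicSurface (hr : r ≠ 0) (s : ℝ) {t : ℝ} (ht : sin t ≠ 0) :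
    Sst (cyclicSurface c r) s t = (cos t / sin t) • pXs (cyclicSurface c r) s t := by
  simp only [Sst, GammaSol, pXs_cyclicSurface, pXt_cyclicSurface hr s ht, deriv_const]
  ext <;> simp

theorem Stt_cyclicSurface {t : ℝ} (hrt : 0 < r * sin t) (s : ℝ) :
    Stt (cyclicSurface c r) s t = -(cos t / sin t) • pXt (cyclicSurface c r) s t := by
  have hr : r ≠ 0 := left_ne_zero_of_mul hrt.ne'
  have ht : sin t ≠ 0 := right_ne_zero_of_mul hrt.ne'
  simp only [Stt, GammaSol, pXt_cyclicSurface hr s ht, deriv_pXt_cyclicSurface hr s ht,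
    exp_neg, exp_two_mul_cyclicSurface hrt, Prod.mk_add_mk, Prod.smul_mk, smul_eq_mul]
  ext <;> field_simp <;> ring

end cyclicSurface

/-- For any `c ∈ ℝ` and `r > 0`, the surface
`X(s,t) = (s, c + r·cos t, log(r·sin t))`, `s ∈ ℝ`, `t ∈ (0,π)`,
has zero Gaussian curvature. -/
theorem flat_geodesic_cyclic_example (c r : ℝ) (hr : 0 < r) :
    GaussZero Set.univ (Set.Ioo 0 π)
      (fun s t => (s, c + r * cos t, log (r * sin t))) := by
  have hsin : ∀ t ∈ Set.Ioo 0 π, 0 < sin t := fun t ht => sin_pos_of_pos_of_lt_pi ht.1 ht.2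
  refine gaussZero_of_Sst_mem_of_Stt_mem (X := cyclicSurface c r) ?_ ?_
  · intro s _ t ht
    rw [Sst_cyclicSurface hr.ne' s (hsin t ht).ne']
    exact Submodule.smul_mem _ _ (Submodule.subset_span (by simp))
  · intro s _ t ht
    rw [Stt_cyclicSurface (mul_pos hr (hsin t ht)) s]
    exact Submodule.smul_mem _ _ (Submodule.subset_span (by simp))
end
end

section
/- A cyclic surface in Sol₃ foliated by horocycles of the form X(s,t) = (s, t, a(s)), where a : I → ℝ is twice continuously differentiable on a nonempty open interval I and t ranges over ℝ, has zero Gaussian curvature if and only if there exist λ, μ ∈ ℝ with e^{−2·a(s)} = −s² + λ·s + μ for all s ∈ I (i.e. a(s) = −(1/2)·log(−s² + λs + μ)). Equivalently, the Gaussian curvature vanishes identically if and only if a''(s) − 2·a'(s)² − e^{2·a(s)} = 0 on I. -/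
/-! Along `X(s,t) = (s, t, a(s))` the normals are the multiples of `(-a' e^{-2a}, 0, 1)`, and for
a normal `n` the Gauss determinant `g(S_ss,n) g(S_tt,n) - g(S_st,n)²` equals
`e^{-2a} n₃² (a'' - 2a'² - e^{2a})`, so flatness is the ODE. For `f = e^{-2a}` one has
`f'' = 2 (2a'² - a'') f`, so the ODE says exactly `f'' = -2`, whose solutions on an interval are
the quadratics `-s² + λ s + μ`. -/

open Real

noncomputable section

open Filter Topology

theorem ContDiffOn.differentiableOn_deriv_of_isOpen {𝕜 F : Type*} [NontriviallyNormedField 𝕜]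
    [NormedAddCommGroup F] [NormedSpace 𝕜 F] {f : 𝕜 → F} {s : Set 𝕜} (hf : ContDiffOn 𝕜 2 f s)
    (hs : IsOpen s) : DifferentiableOn 𝕜 (deriv f) s :=
  (hf.deriv_of_isOpen hs (m := 1) (by norm_num)).differentiableOn one_ne_zero

theorem hasDerivAt_quadratic (c lam mu s : ℝ) :
    HasDerivAt (fun x => c * x ^ 2 + lam * x + mu) (2 * c * s + lam) s :=
  ((((hasDerivAt_pow 2 s).const_mul c).fun_add ((hasDerivAt_id' s).const_mul lam)).add_const
    mu).congr_deriv (by norm_num; ring)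

theorem hasDerivAt_affine (c lam s : ℝ) : HasDerivAt (fun x => c * x + lam) c s :=
  (((hasDerivAt_id' s).const_mul c).add_const lam).congr_deriv (mul_one c)

theorem IsOpen.exists_quadratic_iff_deriv_deriv {I : Set ℝ} (hIo : IsOpen I)
    (hIc : IsPreconnected I) {f : ℝ → ℝ} (hf : DifferentiableOn ℝ f I)
    (hf' : DifferentiableOn ℝ (deriv f) I) (c : ℝ) :
    (∃ lam mu : ℝ, ∀ s ∈ I, f s = c * s ^ 2 + lam * s + mu) ↔
      ∀ s ∈ I, deriv (deriv f) s = 2 * c := by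
  constructor
  · rintro ⟨lam, mu, hquad⟩ s hs
    have hf_eq : f =ᶠ[𝓝 s] fun x => c * x ^ 2 + lam * x + mu :=
      eventually_of_mem (hIo.mem_nhds hs) hquad
    have hf'_eq : deriv f =ᶠ[𝓝 s] fun x => 2 * c * x + lam := by
      filter_upwards [hf_eq.deriv] with x hx
      rw [hx, (hasDerivAt_quadratic c lam mu x).deriv]
    rw [hf'_eq.deriv_eq, (hasDerivAt_affine _ lam s).deriv]
  · intro h
    obtain ⟨lam, hlam⟩ := hIo.exists_eq_add_of_deriv_eq hIc hf'
      (fun x _ => (hasDerivAt_affine (2 * c) 0 x).differentiableAt.differentiableWithinAt)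
      (fun s hs => by rw [h s hs, (hasDerivAt_affine _ 0 s).deriv])
    obtain ⟨mu, hmu⟩ := hIo.exists_eq_add_of_deriv_eq hIc hf
      (fun x _ => (hasDerivAt_quadratic c lam 0 x).differentiableAt.differentiableWithinAt)
      (fun s hs => by rw [hlam hs, (hasDerivAt_quadratic c lam 0 s).deriv]; simp)
    exact ⟨lam, mu, fun s hs => by simpa using hmu hs⟩

theorem hasDerivAt_exp_neg_two_mul {a : ℝ → ℝ} {a' s : ℝ} (h : HasDerivAt a a' s) :
    HasDerivAt (fun x => exp (-(2 * a x))) (-2 * a' * exp (-(2 * a s))) s :=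
  ((h.const_mul 2).fun_neg.exp).congr_deriv (by ring)

theorem deriv_deriv_exp_neg_two_mul {a : ℝ → ℝ} {s : ℝ}
    (ha : ∀ᶠ x in 𝓝 s, DifferentiableAt ℝ a x) (ha' : DifferentiableAt ℝ (deriv a) s) :
    deriv (deriv fun x => exp (-(2 * a x))) s =
      2 * (2 * deriv a s ^ 2 - deriv (deriv a) s) * exp (-(2 * a s)) := by
  have hderiv : (deriv fun x => exp (-(2 * a x))) =ᶠ[𝓝 s]
      fun x => -2 * deriv a x * exp (-(2 * a x)) := by
    filter_upwards [ha] with x hx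
    exact (hasDerivAt_exp_neg_two_mul hx.hasDerivAt).deriv
  rw [hderiv.deriv_eq, ((ha'.hasDerivAt.const_mul (-2)).fun_mul
    (hasDerivAt_exp_neg_two_mul ha.self_of_nhds.hasDerivAt)).deriv]
  ring

theorem deriv_deriv_exp_neg_two_mul_eq_neg_two_iff {a : ℝ → ℝ} {s : ℝ}
    (ha : ∀ᶠ x in 𝓝 s, DifferentiableAt ℝ a x) (ha' : DifferentiableAt ℝ (deriv a) s) :
    deriv (deriv fun x => exp (-(2 * a x))) s = -2 ↔
      deriv (deriv a) s - 2 * deriv a s ^ 2 - exp (2 * a s) = 0 := by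
  rw [deriv_deriv_exp_neg_two_mul ha ha', exp_neg, ← div_eq_mul_inv, div_eq_iff (exp_pos _).ne']
  constructor <;> intro h <;> linarith

def horocycleSurface (a : ℝ → ℝ) : ℝ → ℝ → V3 := fun s t => (s, t, a s)

section HorocycleSurface

variable {a : ℝ → ℝ} {s : ℝ}

theorem pXs_horocycleSurface (ha : DifferentiableAt ℝ a s) (t : ℝ) :
    pXs (horocycleSurface a) s t = (1, 0, deriv a s) :=
  ((hasDerivAt_id' s).prodMk ((hasDerivAt_const s t).prodMk ha.hasDerivAt)).deriv

theorem pXt_horocycleSurface (a : ℝ → ℝ) (s t : ℝ) :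
    pXt (horocycleSurface a) s t = (0, 1, 0) :=
  ((hasDerivAt_const t s).prodMk ((hasDerivAt_id' t).prodMk (hasDerivAt_const t (a s)))).deriv

theorem Sss_horocycleSurface (ha : ∀ᶠ x in 𝓝 s, DifferentiableAt ℝ a x)
    (ha' : DifferentiableAt ℝ (deriv a) s) (t : ℝ) :
    Sss (horocycleSurface a) s t = (2 * deriv a s, 0, deriv (deriv a) s - exp (2 * a s)) := by
  have hXs : (fun x => pXs (horocycleSurface a) x t) =ᶠ[𝓝 s]
      fun x => ((1, 0, deriv a x) : V3) := by
    filter_upwards [ha] with x hx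
    exact pXs_horocycleSurface hx t
  have hXss : HasDerivAt (fun x => ((1, 0, deriv a x) : V3)) (0, 0, deriv (deriv a) s) s :=
    (hasDerivAt_const s 1).prodMk ((hasDerivAt_const s 0).prodMk ha'.hasDerivAt)
  rw [Sss, hXs.deriv_eq, hXss.deriv, pXs_horocycleSurface ha.self_of_nhds]
  simp only [GammaSol, horocycleSurface, Prod.mk_add_mk, Prod.mk.injEq]
  refine ⟨by ring, by ring, by ring⟩

theorem Sst_horocycleSurface (ha : DifferentiableAt ℝ a s) (t : ℝ) :
    Sst (horocycleSurface a) s t = (0, -deriv a s, 0) := by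
  have hXs : (fun t' => pXs (horocycleSurface a) s t') = fun _ => ((1, 0, deriv a s) : V3) :=
    funext (pXs_horocycleSurface ha)
  rw [Sst, hXs, deriv_const, pXs_horocycleSurface ha, pXt_horocycleSurface]
  simp only [GammaSol, Prod.zero_eq_mk, Prod.mk_add_mk, Prod.mk.injEq]
  refine ⟨by ring, by ring, by ring⟩

theorem Stt_horocycleSurface (a : ℝ → ℝ) (s t : ℝ) :
    Stt (horocycleSurface a) s t = (0, 0, exp (-(2 * a s))) := by
  have hXt : (fun t' => pXt (horocycleSurface a) s t') = fun _ => ((0, 1, 0) : V3) :=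
    funext (pXt_horocycleSurface a s)
  rw [Stt, hXt, deriv_const, pXt_horocycleSurface]
  simp only [GammaSol, horocycleSurface, Prod.zero_eq_mk, Prod.mk_add_mk, Prod.mk.injEq]
  refine ⟨by ring, by ring, by ring⟩

theorem gauss_horocycleSurface (ha : ∀ᶠ x in 𝓝 s, DifferentiableAt ℝ a x)
    (ha' : DifferentiableAt ℝ (deriv a) s) (t : ℝ) {n : V3}
    (hns : gSol (horocycleSurface a s t) n (pXs (horocycleSurface a) s t) = 0)
    (hnt : gSol (horocycleSurface a s t) n (pXt (horocycleSurface a) s t) = 0) :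
    gSol (horocycleSurface a s t) (Sss (horocycleSurface a) s t) n *
        gSol (horocycleSurface a s t) (Stt (horocycleSurface a) s t) n -
      gSol (horocycleSurface a s t) (Sst (horocycleSurface a) s t) n ^ 2 =
    exp (-(2 * a s)) * n.2.2 ^ 2 * (deriv (deriv a) s - 2 * deriv a s ^ 2 - exp (2 * a s)) := by
  rw [Sss_horocycleSurface ha ha', Sst_horocycleSurface ha.self_of_nhds, Stt_horocycleSurface]
  rw [pXs_horocycleSurface ha.self_of_nhds] at hns
  rw [pXt_horocycleSurface] at hnt
  simp only [gSol, horocycleSurface] at hns hnt ⊢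
  linear_combination (2 * deriv a s * exp (-(2 * a s)) * n.2.2) * hns
    - (exp (-(2 * a s)) * deriv a s ^ 2 * n.2.1) * hnt

theorem gaussZero_horocycleSurface_iff {I : Set ℝ} (hIo : IsOpen I)
    (ha : DifferentiableOn ℝ a I) (ha' : DifferentiableOn ℝ (deriv a) I) :
    GaussZero I Set.univ (horocycleSurface a) ↔
      ∀ s ∈ I, deriv (deriv a) s - 2 * deriv a s ^ 2 - exp (2 * a s) = 0 := by
  have hda {s} (hs : s ∈ I) : ∀ᶠ x in 𝓝 s, DifferentiableAt ℝ a x :=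
    ha.eventually_differentiableAt (hIo.mem_nhds hs)
  have hdda {s} (hs : s ∈ I) : DifferentiableAt ℝ (deriv a) s :=
    ha'.differentiableAt (hIo.mem_nhds hs)
  constructor
  · intro hG s hs
    set normal : V3 := (-(deriv a s * exp (-(2 * a s))), 0, 1)
    have hexp : exp (2 * a s) * exp (-(2 * a s)) = 1 := by
      rw [← exp_add, add_neg_cancel, exp_zero]
    have hns : gSol (horocycleSurface a s 0) normal (pXs (horocycleSurface a) s 0) = 0 := by
      simp only [gSol, horocycleSurface, normal, pXs_horocycleSurface (hda hs).self_of_nhds]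
      linear_combination -deriv a s * hexp
    have hnt : gSol (horocycleSurface a s 0) normal (pXt (horocycleSurface a) s 0) = 0 := by
      simp only [gSol, normal, pXt_horocycleSurface]
      ring
    have := hG s hs 0 trivial normal hns hnt
    rw [gauss_horocycleSurface (hda hs) (hdda hs) 0 hns hnt] at this
    simpa [normal, (exp_pos _).ne'] using this
  · intro hode s hs t _ n hns hnt
    rw [gauss_horocycleSurface (hda hs) (hdda hs) t hns hnt, hode s hs, mul_zero]

end HorocycleSurface

theorem flat_foliated_by_horocycles_general
    (I : Set ℝ) (hIo : IsOpen I) (hIc : I.OrdConnected)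
    (a : ℝ → ℝ) (ha : ContDiffOn ℝ 2 a I) :
    (GaussZero I Set.univ (fun s t => (s, t, a s)) ↔
      ∃ lam mu : ℝ, ∀ s ∈ I, exp (-(2 * a s)) = -s ^ 2 + lam * s + mu) ∧
    (GaussZero I Set.univ (fun s t => (s, t, a s)) ↔
      ∀ s ∈ I, deriv (deriv a) s - 2 * (deriv a s) ^ 2 - exp (2 * a s) = 0) := by
  have hda : DifferentiableOn ℝ a I := ha.differentiableOn two_ne_zero
  have hdda : DifferentiableOn ℝ (deriv a) I := ha.differentiableOn_deriv_of_isOpen hIo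
  have hgauss := gaussZero_horocycleSurface_iff hIo hda hdda
  have hf : ContDiffOn ℝ 2 (fun s => exp (-(2 * a s))) I := (ha.const_smul (2 : ℝ)).neg.exp
  have hquad := hIo.exists_quadratic_iff_deriv_deriv hIc.isPreconnected
    (hf.differentiableOn two_ne_zero) (hf.differentiableOn_deriv_of_isOpen hIo) (-1)
  have hode : (∀ s ∈ I, deriv (deriv fun x => exp (-(2 * a x))) s = 2 * -1) ↔
      ∀ s ∈ I, deriv (deriv a) s - 2 * deriv a s ^ 2 - exp (2 * a s) = 0 :=
    forall₂_congr fun s hs => by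
      rw [mul_neg_one, deriv_deriv_exp_neg_two_mul_eq_neg_two_iff
        (hda.eventually_differentiableAt (hIo.mem_nhds hs))
        (hdda.differentiableAt (hIo.mem_nhds hs))]
  simp only [neg_one_mul] at hquad
  exact ⟨hgauss.trans (hode.symm.trans hquad.symm), hgauss⟩

/-- The cyclic surface `X(s,t) = (s, t, a(s))` foliated by horocycles
has zero Gaussian curvature iff `e^{-2a(s)} = -s² + λs + μ`, equivalently iff
`a'' - 2a'² - e^{2a} = 0` on `I`. -/
theorem flat_foliated_by_horocycles
    (I : Set ℝ) (hIo : IsOpen I) (hIne : I.Nonempty) (hIc : I.OrdConnected)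
    (a : ℝ → ℝ) (ha : ContDiffOn ℝ 2 a I) :
    (GaussZero I Set.univ (fun s t => (s, t, a s)) ↔
      ∃ lam mu : ℝ, ∀ s ∈ I, exp (-(2 * a s)) = -s ^ 2 + lam * s + mu) ∧
    (GaussZero I Set.univ (fun s t => (s, t, a s)) ↔
      ∀ s ∈ I, deriv (deriv a) s - 2 * (deriv a s) ^ 2 - exp (2 * a s) = 0) :=
  flat_foliated_by_horocycles_general I hIo hIc a ha
end
end
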